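/- In a category C equipped with a pre-differential structure satisfying (Dproj-lin), (D-chain) and (D-add): any morphism h ∈ C(X, Y) with ∂h = h ∘ π₁ is additive, and hence D-linear. -/
import Mathlib


open CategoryTheory CategoryTheory.Limits
open scoped Classical

universe v u

/-- A summable pairing structure on a category `C` whose hom-sets carry a
distinguished morphism `0` satisfying `0 ∘ f = 0`. -/
structure SummablePairing (C : Type u) [Category.{v} C] where
  /-- the distinguished zero morphism of each hom-set -/
  zero : ∀ X Y : C, X ⟶ Y
  /-- `0 ∘ f = 0` -/
  comp_zero : ∀ {X Y Z : C} (f : X ⟶ Y), f ≫ zero Y Z = zero X Z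
  /-- the map on objects -/
  D : C → C
  p0 : ∀ X : C, D X ⟶ X
  p1 : ∀ X : C, D X ⟶ X
  s : ∀ X : C, D X ⟶ X
  /-- `p0` and `p1` are jointly monic -/
  jointly_monic : ∀ {Y X : C} {f g : Y ⟶ D X},
    f ≫ p0 X = g ≫ p0 X → f ≫ p1 X = g ≫ p1 X → f = g

namespace SummablePairing

variable {C : Type u} [Category.{v} C]

/-- `f0 ⊞ f1` : summability of two parallel morphisms. -/
def Summable (S : SummablePairing C) {X Y : C} (f0 f1 : X ⟶ Y) : Prop :=
  ∃ w : X ⟶ S.D Y, w ≫ S.p0 Y = f0 ∧ w ≫ S.p1 Y = f1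

/-- the witness `⟨f0, f1⟩` of a summable pair (an arbitrary default otherwise) -/
noncomputable def wit (S : SummablePairing C) {X Y : C} (f0 f1 : X ⟶ Y) : X ⟶ S.D Y :=
  if h : S.Summable f0 f1 then h.choose else S.zero X (S.D Y)

/-- the sum `f0 + f1` of a summable pair -/
noncomputable def add (S : SummablePairing C) {X Y : C} (f0 f1 : X ⟶ Y) : X ⟶ Y :=
  S.wit f0 f1 ≫ S.s Y

/-- additive morphisms -/
def Additive (S : SummablePairing C) {Y Z : C} (h : Y ⟶ Z) : Prop :=
  (∀ X : C, S.zero X Y ≫ h = S.zero X Z) ∧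
  (∀ (X : C) (f0 f1 : X ⟶ Y), S.Summable f0 f1 →
    S.Summable (f0 ≫ h) (f1 ≫ h) ∧ S.add f0 f1 ≫ h = S.add (f0 ≫ h) (f1 ≫ h))

/-- a left pre-summability structure: `p0`, `p1` and `s` are additive -/
def IsLeftPreSummability (S : SummablePairing C) : Prop :=
  (∀ X : C, S.Additive (S.p0 X)) ∧ (∀ X : C, S.Additive (S.p1 X)) ∧
  (∀ X : C, S.Additive (S.s X))

/-- axiom (D-com) -/
def Dcom (S : SummablePairing C) : Prop :=
  ∀ X : C, S.Summable (S.p1 X) (S.p0 X) ∧ S.add (S.p1 X) (S.p0 X) = S.s X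

/-- axiom (D-zero) -/
def Dzero (S : SummablePairing C) : Prop :=
  ∀ X : C, S.Summable (𝟙 X) (S.zero X X) ∧ S.Summable (S.zero X X) (𝟙 X) ∧
    S.add (𝟙 X) (S.zero X X) = 𝟙 X ∧ S.add (S.zero X X) (𝟙 X) = 𝟙 X

/-- axiom (D-witness) -/
def Dwitness (S : SummablePairing C) : Prop :=
  ∀ (Y X : C) (f g : Y ⟶ S.D X),
    S.Summable (f ≫ S.s X) (g ≫ S.s X) → S.Summable f g

/-- a left summability structure -/
def IsLeftSummability (S : SummablePairing C) : Prop :=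
  S.IsLeftPreSummability ∧ S.Dcom ∧ S.Dzero ∧ S.Dwitness

/-- `ι₀ = ⟨id, 0⟩` -/
noncomputable def iota0 (S : SummablePairing C) (X : C) : X ⟶ S.D X :=
  S.wit (𝟙 X) (S.zero X X)

/-- `θ = ⟨π₀ ∘ π₀, π₁ ∘ π₀ + π₀ ∘ π₁⟩` -/
noncomputable def theta (S : SummablePairing C) (X : C) : S.D (S.D X) ⟶ S.D X :=
  S.wit (S.p0 (S.D X) ≫ S.p0 X)
    (S.add (S.p0 (S.D X) ≫ S.p1 X) (S.p1 (S.D X) ≫ S.p0 X))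

/-- `l = ⟨⟨π₀, 0⟩, ⟨0, π₁⟩⟩` -/
noncomputable def lmor (S : SummablePairing C) (X : C) : S.D X ⟶ S.D (S.D X) :=
  S.wit (S.wit (S.p0 X) (S.zero (S.D X) X)) (S.wit (S.zero (S.D X) X) (S.p1 X))

/-- `c = ⟨⟨π₀ ∘ π₀, π₀ ∘ π₁⟩, ⟨π₁ ∘ π₀, π₁ ∘ π₁⟩⟩` -/
noncomputable def cmor (S : SummablePairing C) (X : C) : S.D (S.D X) ⟶ S.D (S.D X) :=
  S.wit (S.wit (S.p0 (S.D X) ≫ S.p0 X) (S.p1 (S.D X) ≫ S.p0 X))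
        (S.wit (S.p0 (S.D X) ≫ S.p1 X) (S.p1 (S.D X) ≫ S.p1 X))

end SummablePairing

/-- summability of a finite family of morphisms (represented as a multiset),
together with its sum, defined inductively -/
inductive SummablePairing.MSummable {C : Type u} [Category.{v} C] (S : SummablePairing C) :
    ∀ {X Y : C}, Multiset (X ⟶ Y) → (X ⟶ Y) → Prop
  | nil {X Y : C} : SummablePairing.MSummable S (0 : Multiset (X ⟶ Y)) (S.zero X Y)
  | cons {X Y : C} {m : Multiset (X ⟶ Y)} {t f : X ⟶ Y} :
      SummablePairing.MSummable S m t → S.Summable t f →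
      SummablePairing.MSummable S (f ::ₘ m) (S.add t f)

/-- the data making a left summability structure a pre-differential structure:
an operator `D` on morphisms with `π₀ ∘ D f = f ∘ π₀` -/
structure DiffOp {C : Type u} [Category.{v} C] (S : SummablePairing C) where
  map : ∀ {X Y : C}, (X ⟶ Y) → (S.D X ⟶ S.D Y)
  map_p0 : ∀ {X Y : C} (f : X ⟶ Y), map f ≫ S.p0 Y = S.p0 X ≫ f

namespace DiffOp

variable {C : Type u} [Category.{v} C] {S : SummablePairing C}

/-- the differential `∂f = π₁ ∘ D f` -/
def dd (Dm : DiffOp S) {X Y : C} (f : X ⟶ Y) : S.D X ⟶ Y := Dm.map f ≫ S.p1 Y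

/-- D-linear morphisms -/
def DLinear (Dm : DiffOp S) {X Y : C} (f : X ⟶ Y) : Prop :=
  Dm.map f ≫ S.p1 Y = S.p1 X ≫ f ∧ Dm.map f ≫ S.s Y = S.s X ≫ f ∧
  (∀ U : C, S.zero U X ≫ f = S.zero U Y)

/-- axiom (Dproj-lin) -/
def DprojLin (Dm : DiffOp S) : Prop :=
  (∀ X : C, Dm.DLinear (S.p0 X)) ∧ (∀ X : C, Dm.DLinear (S.p1 X))

/-- axiom (Dsum-lin) -/
def DsumLin (Dm : DiffOp S) : Prop :=
  (∀ X : C, Dm.DLinear (S.s X)) ∧ (∀ X Y : C, Dm.DLinear (S.zero X Y))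

/-- axiom (D-chain): functoriality -/
def Dchain (Dm : DiffOp S) : Prop :=
  (∀ X : C, Dm.map (𝟙 X) = 𝟙 (S.D X)) ∧
  (∀ (X Y Z : C) (f : X ⟶ Y) (g : Y ⟶ Z), Dm.map (f ≫ g) = Dm.map f ≫ Dm.map g)

/-- axiom (D-add): naturality of `ι₀` and `θ` -/
def Dadd (Dm : DiffOp S) : Prop :=
  (∀ (X Y : C) (f : X ⟶ Y), S.iota0 X ≫ Dm.map f = f ≫ S.iota0 Y) ∧
  (∀ (X Y : C) (f : X ⟶ Y), S.theta X ≫ Dm.map f = Dm.map (Dm.map f) ≫ S.theta Y)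

/-- axiom (D-lin): naturality of `l` -/
def Dlin (Dm : DiffOp S) : Prop :=
  ∀ (X Y : C) (f : X ⟶ Y), Dm.map f ≫ S.lmor Y = S.lmor X ≫ Dm.map (Dm.map f)

/-- axiom (D-Schwarz): naturality of `c` -/
def Dschwarz (Dm : DiffOp S) : Prop :=
  ∀ (X Y : C) (f : X ⟶ Y),
    S.cmor X ≫ Dm.map (Dm.map f) = Dm.map (Dm.map f) ≫ S.cmor Y

end DiffOp


section Aux

namespace SummablePairing

variable {C : Type u} [Category.{v} C] (S : SummablePairing C)

theorem wit_eq' {X Y : C} {f0 f1 : X ⟶ Y} {w : X ⟶ S.D Y}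
    (h0 : w ≫ S.p0 Y = f0) (h1 : w ≫ S.p1 Y = f1) : S.wit f0 f1 = w := by
  have hs : S.Summable f0 f1 := ⟨w, h0, h1⟩
  have hw : S.wit f0 f1 = hs.choose := dif_pos hs
  rw [hw]
  exact S.jointly_monic (hs.choose_spec.1.trans h0.symm) (hs.choose_spec.2.trans h1.symm)

theorem wit_p0' {X Y : C} {f0 f1 : X ⟶ Y} (h : S.Summable f0 f1) :
    S.wit f0 f1 ≫ S.p0 Y = f0 := by
  obtain ⟨w, h0, h1⟩ := h
  rw [S.wit_eq' h0 h1]; exact h0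

theorem wit_p1' {X Y : C} {f0 f1 : X ⟶ Y} (h : S.Summable f0 f1) :
    S.wit f0 f1 ≫ S.p1 Y = f1 := by
  obtain ⟨w, h0, h1⟩ := h
  rw [S.wit_eq' h0 h1]; exact h1

theorem add_eq' {X Y : C} {f0 f1 : X ⟶ Y} {w : X ⟶ S.D Y}
    (h0 : w ≫ S.p0 Y = f0) (h1 : w ≫ S.p1 Y = f1) : S.add f0 f1 = w ≫ S.s Y := by
  rw [add, S.wit_eq' h0 h1]

theorem add_zero'' (hz : S.Dzero) {A X : C} (f : A ⟶ X) :
    S.add f (S.zero A X) = f := by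
  have i0p0 : S.wit (𝟙 X) (S.zero X X) ≫ S.p0 X = 𝟙 X := S.wit_p0' (hz X).1
  have i0p1 : S.wit (𝟙 X) (S.zero X X) ≫ S.p1 X = S.zero X X := S.wit_p1' (hz X).1
  have i0s : S.wit (𝟙 X) (S.zero X X) ≫ S.s X = 𝟙 X := (hz X).2.2.1
  have h0 : (f ≫ S.wit (𝟙 X) (S.zero X X)) ≫ S.p0 X = f := by
    rw [Category.assoc, i0p0, Category.comp_id]
  have h1 : (f ≫ S.wit (𝟙 X) (S.zero X X)) ≫ S.p1 X = S.zero A X := by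
    rw [Category.assoc, i0p1, S.comp_zero]
  rw [S.add_eq' h0 h1, Category.assoc, i0s, Category.comp_id]

theorem summable_comm' (hS : S.IsLeftSummability) {A X : C} {f0 f1 : A ⟶ X}
    (h : S.Summable f0 f1) : S.Summable f1 f0 ∧ S.add f1 f0 = S.add f0 f1 := by
  obtain ⟨w, h0, h1⟩ := h
  have hc := hS.2.1 X
  have g0 : S.wit (S.p1 X) (S.p0 X) ≫ S.p0 X = S.p1 X := S.wit_p0' hc.1
  have g1 : S.wit (S.p1 X) (S.p0 X) ≫ S.p1 X = S.p0 X := S.wit_p1' hc.1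
  have gs : S.wit (S.p1 X) (S.p0 X) ≫ S.s X = S.s X := hc.2
  have e0 : (w ≫ S.wit (S.p1 X) (S.p0 X)) ≫ S.p0 X = f1 := by
    rw [Category.assoc, g0, h1]
  have e1 : (w ≫ S.wit (S.p1 X) (S.p0 X)) ≫ S.p1 X = f0 := by
    rw [Category.assoc, g1, h0]
  refine ⟨⟨_, e0, e1⟩, ?_⟩
  rw [S.add_eq' e0 e1, S.add_eq' h0 h1, Category.assoc, gs]

theorem summable_assoc' (hS : S.IsLeftSummability) {A X : C} {f0 f1 f2 : A ⟶ X}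
    (h01 : S.Summable f0 f1) (h2 : S.Summable (S.add f0 f1) f2) :
    S.Summable f1 f2 ∧ S.Summable f0 (S.add f1 f2) ∧
      S.add f0 (S.add f1 f2) = S.add (S.add f0 f1) f2 := by
  obtain ⟨w, w0, w1⟩ := h01
  have hz := hS.2.2.1
  have j0 : S.wit (S.zero X X) (𝟙 X) ≫ S.p0 X = S.zero X X := S.wit_p0' (hz X).2.1
  have j1 : S.wit (S.zero X X) (𝟙 X) ≫ S.p1 X = 𝟙 X := S.wit_p1' (hz X).2.1
  have js : S.wit (S.zero X X) (𝟙 X) ≫ S.s X = 𝟙 X := (hz X).2.2.2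
  have hws : w ≫ S.s X = S.add f0 f1 := (S.add_eq' w0 w1).symm
  have hfj : (f2 ≫ S.wit (S.zero X X) (𝟙 X)) ≫ S.s X = f2 := by
    rw [Category.assoc, js, Category.comp_id]
  have hwu : S.Summable w (f2 ≫ S.wit (S.zero X X) (𝟙 X)) := by
    apply hS.2.2.2
    rw [hws, hfj]; exact h2
  have hp1 := (hS.1.2.1 X).2 A _ _ hwu
  have hp0 := (hS.1.1 X).2 A _ _ hwu
  have hs := (hS.1.2.2 X).2 A _ _ hwu
  have e2 : (f2 ≫ S.wit (S.zero X X) (𝟙 X)) ≫ S.p1 X = f2 := by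
    rw [Category.assoc, j1, Category.comp_id]
  have h12 : S.Summable f1 f2 := by rw [← w1, ← e2]; exact hp1.1
  have P0 : S.add w (f2 ≫ S.wit (S.zero X X) (𝟙 X)) ≫ S.p0 X = f0 := by
    have ez : (f2 ≫ S.wit (S.zero X X) (𝟙 X)) ≫ S.p0 X = S.zero A X := by
      rw [Category.assoc, j0, S.comp_zero]
    rw [hp0.2, w0, ez, S.add_zero'' hz]
  have P1 : S.add w (f2 ≫ S.wit (S.zero X X) (𝟙 X)) ≫ S.p1 X = S.add f1 f2 := by
    rw [hp1.2, w1, e2]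
  refine ⟨h12, ⟨_, P0, P1⟩, ?_⟩
  rw [S.add_eq' P0 P1, hs.2, hws, hfj]

theorem summable_split' (hS : S.IsLeftSummability) {A X : C} {a b c : A ⟶ X}
    (hbc : S.Summable b c) (ha : S.Summable a (S.add b c)) : S.Summable a b := by
  have h1 : S.Summable (S.add b c) a := (S.summable_comm' hS ha).1
  obtain ⟨hca, hb, -⟩ := S.summable_assoc' hS hbc h1
  have h2 : S.Summable (S.add c a) b := (S.summable_comm' hS hb).1
  obtain ⟨hab, -, -⟩ := S.summable_assoc' hS hca h2
  exact hab

theorem theta_pair (hS : S.IsLeftSummability) (X : C) :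
    S.Summable (S.p0 (S.D X) ≫ S.p1 X) (S.p1 (S.D X) ≫ S.p0 X) ∧
    S.Summable (S.p0 (S.D X) ≫ S.p0 X)
      (S.add (S.p0 (S.D X) ≫ S.p1 X) (S.p1 (S.D X) ≫ S.p0 X)) := by
  have h1 : S.Summable (S.p0 (S.D X) ≫ S.p0 X) (S.p0 (S.D X) ≫ S.p1 X) :=
    ⟨S.p0 (S.D X), rfl, rfl⟩
  have h2 : S.Summable (S.p1 (S.D X) ≫ S.p0 X) (S.p1 (S.D X) ≫ S.p1 X) :=
    ⟨S.p1 (S.D X), rfl, rfl⟩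
  have hpp : S.Summable (S.p0 (S.D X)) (S.p1 (S.D X)) :=
    ⟨𝟙 _, Category.id_comp _, Category.id_comp _⟩
  have h3 := (hS.1.2.2 X).2 _ _ _ hpp
  have e1 : S.add (S.p0 (S.D X) ≫ S.p0 X) (S.p0 (S.D X) ≫ S.p1 X)
      = S.p0 (S.D X) ≫ S.s X := S.add_eq' rfl rfl
  have e2 : S.add (S.p1 (S.D X) ≫ S.p0 X) (S.p1 (S.D X) ≫ S.p1 X)
      = S.p1 (S.D X) ≫ S.s X := S.add_eq' rfl rfl
  have hsplit : S.Summable (S.p0 (S.D X) ≫ S.s X) (S.p1 (S.D X) ≫ S.p0 X) := by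
    refine S.summable_split' hS h2 ?_
    rw [e2]; exact h3.1
  have hA := S.summable_assoc' hS h1 (by rw [e1]; exact hsplit)
  exact ⟨hA.1, hA.2.1⟩

theorem theta_p1' (hS : S.IsLeftSummability) (X : C) :
    S.theta X ≫ S.p1 X
      = S.wit (S.p0 (S.D X) ≫ S.p1 X) (S.p1 (S.D X) ≫ S.p0 X) ≫ S.s X :=
  S.wit_p1' (S.theta_pair hS X).2

end SummablePairing

end Aux

/-- under (Dproj-lin), (D-chain) and (D-add), any `h` with
`∂h = h ∘ π₁` is additive, hence D-linear. -/
theorem stmt9 {C : Type u} [Category.{v} C] (S : SummablePairing C)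
    (hS : S.IsLeftSummability) (Dm : DiffOp S)
    (hproj : Dm.DprojLin) (hchain : Dm.Dchain) (hadd : Dm.Dadd)
    {X Y : C} (h : X ⟶ Y) (hh : Dm.map h ≫ S.p1 Y = S.p1 X ≫ h) :
    S.Additive h ∧ Dm.DLinear h := by
  have hzX := hS.2.2.1
  have i0p1X : S.iota0 X ≫ S.p1 X = S.zero X X := S.wit_p1' (hzX X).1
  have i0p1Y : S.iota0 Y ≫ S.p1 Y = S.zero Y Y := S.wit_p1' (hzX Y).1
  have hzero1 : S.zero X X ≫ h = S.zero X Y := by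
    have hnat := hadd.1 X Y h
    calc S.zero X X ≫ h = (S.iota0 X ≫ S.p1 X) ≫ h := by rw [i0p1X]
      _ = S.iota0 X ≫ S.p1 X ≫ h := by rw [Category.assoc]
      _ = S.iota0 X ≫ Dm.map h ≫ S.p1 Y := by rw [hh]
      _ = (S.iota0 X ≫ Dm.map h) ≫ S.p1 Y := by rw [Category.assoc]
      _ = (h ≫ S.iota0 Y) ≫ S.p1 Y := by rw [hnat]
      _ = h ≫ S.zero Y Y := by rw [Category.assoc, i0p1Y]
      _ = S.zero X Y := S.comp_zero h
  have hzero : ∀ U : C, S.zero U X ≫ h = S.zero U Y := by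
    intro U
    calc S.zero U X ≫ h = (S.zero U X ≫ S.zero X X) ≫ h := by rw [S.comp_zero]
      _ = S.zero U X ≫ S.zero X X ≫ h := by rw [Category.assoc]
      _ = S.zero U X ≫ S.zero X Y := by rw [hzero1]
      _ = S.zero U Y := S.comp_zero _
  -- components of ι₀ = ⟨1,0⟩ and ι₁ = ⟨0,1⟩ at X
  have i0p0 : S.wit (𝟙 X) (S.zero X X) ≫ S.p0 X = 𝟙 X := S.wit_p0' (hzX X).1
  have i0s : S.wit (𝟙 X) (S.zero X X) ≫ S.s X = 𝟙 X := (hzX X).2.2.1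
  have i1p1 : S.wit (S.zero X X) (𝟙 X) ≫ S.p1 X = 𝟙 X := S.wit_p1' (hzX X).2.1
  have i1s : S.wit (S.zero X X) (𝟙 X) ≫ S.s X = 𝟙 X := (hzX X).2.2.2
  -- k = ⟨⟨0,π₀⟩, ⟨π₁,0⟩⟩ : D X ⟶ D (D X)
  have hk : S.Summable (S.p0 X ≫ S.wit (S.zero X X) (𝟙 X))
      (S.p1 X ≫ S.wit (𝟙 X) (S.zero X X)) := by
    apply hS.2.2.2
    have e0 : (S.p0 X ≫ S.wit (S.zero X X) (𝟙 X)) ≫ S.s X = S.p0 X := by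
      rw [Category.assoc, i1s, Category.comp_id]
    have e1 : (S.p1 X ≫ S.wit (𝟙 X) (S.zero X X)) ≫ S.s X = S.p1 X := by
      rw [Category.assoc, i0s, Category.comp_id]
    rw [e0, e1]
    exact ⟨𝟙 _, Category.id_comp _, Category.id_comp _⟩
  set k := S.wit (S.p0 X ≫ S.wit (S.zero X X) (𝟙 X))
      (S.p1 X ≫ S.wit (𝟙 X) (S.zero X X)) with hkdef
  have k0 : k ≫ S.p0 (S.D X) = S.p0 X ≫ S.wit (S.zero X X) (𝟙 X) := S.wit_p0' hk
  have k1 : k ≫ S.p1 (S.D X) = S.p1 X ≫ S.wit (𝟙 X) (S.zero X X) := S.wit_p1' hk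
  have kc0 : k ≫ S.p0 (S.D X) ≫ S.p1 X = S.p0 X := by
    rw [← Category.assoc, k0, Category.assoc, i1p1, Category.comp_id]
  have kc1 : k ≫ S.p1 (S.D X) ≫ S.p0 X = S.p1 X := by
    rw [← Category.assoc, k1, Category.assoc, i0p0, Category.comp_id]
  -- cross pairs at X and Y
  have hθX := S.theta_pair hS X
  have hθY := S.theta_pair hS Y
  have VX0 : S.wit (S.p0 (S.D X) ≫ S.p1 X) (S.p1 (S.D X) ≫ S.p0 X) ≫ S.p0 X
      = S.p0 (S.D X) ≫ S.p1 X := S.wit_p0' hθX.1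
  have VX1 : S.wit (S.p0 (S.D X) ≫ S.p1 X) (S.p1 (S.D X) ≫ S.p0 X) ≫ S.p1 X
      = S.p1 (S.D X) ≫ S.p0 X := S.wit_p1' hθX.1
  have VY0 : S.wit (S.p0 (S.D Y) ≫ S.p1 Y) (S.p1 (S.D Y) ≫ S.p0 Y) ≫ S.p0 Y
      = S.p0 (S.D Y) ≫ S.p1 Y := S.wit_p0' hθY.1
  have VY1 : S.wit (S.p0 (S.D Y) ≫ S.p1 Y) (S.p1 (S.D Y) ≫ S.p0 Y) ≫ S.p1 Y
      = S.p1 (S.D Y) ≫ S.p0 Y := S.wit_p1' hθY.1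
  -- k ≫ VX = 1
  have hkV : k ≫ S.wit (S.p0 (S.D X) ≫ S.p1 X) (S.p1 (S.D X) ≫ S.p0 X) = 𝟙 (S.D X) := by
    apply S.jointly_monic
    · rw [Category.assoc, VX0, Category.id_comp, kc0]
    · rw [Category.assoc, VX1, Category.id_comp, kc1]
  -- second-order differential computations
  have cc : Dm.map (Dm.map h) ≫ Dm.map (S.p0 Y) = Dm.map (S.p0 X) ≫ Dm.map h := by
    rw [← hchain.2, ← hchain.2, Dm.map_p0]
  have lin0X : Dm.map (S.p0 X) ≫ S.p1 X = S.p1 (S.D X) ≫ S.p0 X := (hproj.1 X).1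
  have lin0Y : Dm.map (S.p0 Y) ≫ S.p1 Y = S.p1 (S.D Y) ≫ S.p0 Y := (hproj.1 Y).1
  have c1 : Dm.map (Dm.map h) ≫ S.p1 (S.D Y) ≫ S.p0 Y = S.p1 (S.D X) ≫ S.p0 X ≫ h := by
    calc Dm.map (Dm.map h) ≫ S.p1 (S.D Y) ≫ S.p0 Y
        = Dm.map (Dm.map h) ≫ Dm.map (S.p0 Y) ≫ S.p1 Y := by rw [lin0Y]
      _ = (Dm.map (Dm.map h) ≫ Dm.map (S.p0 Y)) ≫ S.p1 Y := by rw [Category.assoc]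
      _ = (Dm.map (S.p0 X) ≫ Dm.map h) ≫ S.p1 Y := by rw [cc]
      _ = Dm.map (S.p0 X) ≫ Dm.map h ≫ S.p1 Y := by rw [Category.assoc]
      _ = Dm.map (S.p0 X) ≫ S.p1 X ≫ h := by rw [hh]
      _ = (Dm.map (S.p0 X) ≫ S.p1 X) ≫ h := by rw [Category.assoc]
      _ = (S.p1 (S.D X) ≫ S.p0 X) ≫ h := by rw [lin0X]
      _ = S.p1 (S.D X) ≫ S.p0 X ≫ h := by rw [Category.assoc]
  have c2 : Dm.map (Dm.map h) ≫ S.p0 (S.D Y) ≫ S.p1 Y = S.p0 (S.D X) ≫ S.p1 X ≫ h := by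
    calc Dm.map (Dm.map h) ≫ S.p0 (S.D Y) ≫ S.p1 Y
        = (Dm.map (Dm.map h) ≫ S.p0 (S.D Y)) ≫ S.p1 Y := by rw [Category.assoc]
      _ = (S.p0 (S.D X) ≫ Dm.map h) ≫ S.p1 Y := by rw [Dm.map_p0]
      _ = S.p0 (S.D X) ≫ Dm.map h ≫ S.p1 Y := by rw [Category.assoc]
      _ = S.p0 (S.D X) ≫ S.p1 X ≫ h := by rw [hh]
  -- k ≫ D²h ≫ VY = D h
  have hkW : k ≫ Dm.map (Dm.map h)
      ≫ S.wit (S.p0 (S.D Y) ≫ S.p1 Y) (S.p1 (S.D Y) ≫ S.p0 Y) = Dm.map h := by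
    apply S.jointly_monic
    · calc (k ≫ Dm.map (Dm.map h)
          ≫ S.wit (S.p0 (S.D Y) ≫ S.p1 Y) (S.p1 (S.D Y) ≫ S.p0 Y)) ≫ S.p0 Y
          = k ≫ Dm.map (Dm.map h)
            ≫ S.wit (S.p0 (S.D Y) ≫ S.p1 Y) (S.p1 (S.D Y) ≫ S.p0 Y) ≫ S.p0 Y := by
            simp only [Category.assoc]
        _ = k ≫ Dm.map (Dm.map h) ≫ S.p0 (S.D Y) ≫ S.p1 Y := by rw [VY0]
        _ = k ≫ S.p0 (S.D X) ≫ S.p1 X ≫ h := by rw [c2]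
        _ = (k ≫ S.p0 (S.D X) ≫ S.p1 X) ≫ h := by simp only [Category.assoc]
        _ = S.p0 X ≫ h := by rw [kc0]
        _ = Dm.map h ≫ S.p0 Y := (Dm.map_p0 h).symm
    · calc (k ≫ Dm.map (Dm.map h)
          ≫ S.wit (S.p0 (S.D Y) ≫ S.p1 Y) (S.p1 (S.D Y) ≫ S.p0 Y)) ≫ S.p1 Y
          = k ≫ Dm.map (Dm.map h)
            ≫ S.wit (S.p0 (S.D Y) ≫ S.p1 Y) (S.p1 (S.D Y) ≫ S.p0 Y) ≫ S.p1 Y := by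
            simp only [Category.assoc]
        _ = k ≫ Dm.map (Dm.map h) ≫ S.p1 (S.D Y) ≫ S.p0 Y := by rw [VY1]
        _ = k ≫ S.p1 (S.D X) ≫ S.p0 X ≫ h := by rw [c1]
        _ = (k ≫ S.p1 (S.D X) ≫ S.p0 X) ≫ h := by simp only [Category.assoc]
        _ = S.p1 X ≫ h := by rw [kc1]
        _ = Dm.map h ≫ S.p1 Y := hh.symm
  -- main key equation : σ ≫ h = D h ≫ σ
  have E := hadd.2 X Y h
  have key : S.s X ≫ h = Dm.map h ≫ S.s Y := by
    calc S.s X ≫ h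
        = (k ≫ S.wit (S.p0 (S.D X) ≫ S.p1 X) (S.p1 (S.D X) ≫ S.p0 X)) ≫ S.s X ≫ h := by
          rw [hkV, Category.id_comp]
      _ = k ≫ (S.wit (S.p0 (S.D X) ≫ S.p1 X) (S.p1 (S.D X) ≫ S.p0 X) ≫ S.s X) ≫ h := by
          simp only [Category.assoc]
      _ = k ≫ (S.theta X ≫ S.p1 X) ≫ h := by rw [S.theta_p1' hS X]
      _ = k ≫ S.theta X ≫ S.p1 X ≫ h := by simp only [Category.assoc]
      _ = k ≫ S.theta X ≫ Dm.map h ≫ S.p1 Y := by rw [hh]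
      _ = k ≫ (S.theta X ≫ Dm.map h) ≫ S.p1 Y := by simp only [Category.assoc]
      _ = k ≫ (Dm.map (Dm.map h) ≫ S.theta Y) ≫ S.p1 Y := by rw [E]
      _ = k ≫ Dm.map (Dm.map h) ≫ S.theta Y ≫ S.p1 Y := by simp only [Category.assoc]
      _ = k ≫ Dm.map (Dm.map h)
            ≫ S.wit (S.p0 (S.D Y) ≫ S.p1 Y) (S.p1 (S.D Y) ≫ S.p0 Y) ≫ S.s Y := by
          rw [S.theta_p1' hS Y]
      _ = (k ≫ Dm.map (Dm.map h)
            ≫ S.wit (S.p0 (S.D Y) ≫ S.p1 Y) (S.p1 (S.D Y) ≫ S.p0 Y)) ≫ S.s Y := by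
          simp only [Category.assoc]
      _ = Dm.map h ≫ S.s Y := by rw [hkW]
  -- additivity
  have hsum : ∀ (U : C) (f0 f1 : U ⟶ X), S.Summable f0 f1 →
      S.Summable (f0 ≫ h) (f1 ≫ h) ∧ S.add f0 f1 ≫ h = S.add (f0 ≫ h) (f1 ≫ h) := by
    intro U f0 f1 hf
    obtain ⟨w, w0, w1⟩ := hf
    have W0 : (w ≫ Dm.map h) ≫ S.p0 Y = f0 ≫ h := by
      rw [Category.assoc, Dm.map_p0, ← Category.assoc, w0]
    have W1 : (w ≫ Dm.map h) ≫ S.p1 Y = f1 ≫ h := by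
      rw [Category.assoc, hh, ← Category.assoc, w1]
    refine ⟨⟨_, W0, W1⟩, ?_⟩
    rw [S.add_eq' w0 w1, S.add_eq' W0 W1]
    simp only [Category.assoc]
    rw [key]
  exact ⟨⟨hzero, hsum⟩, hh, key.symm, hzero⟩
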